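/- arXiv:1905.13611 — 2 statements merged into one kernel-verified Lean document; each statement's English description precedes it below -/
import Mathlib

section
/- Let φ : ℝⁿ → ℝ be differentiable and Ω : ℝⁿ → ℝ convex. Fix θ > 0 and x₀ ∈ ℝⁿ, and define P(x) = φ(x₀) + ⟨∇φ(x₀), x - x₀⟩ + (θ/2)‖x - x₀‖². Suppose x* minimizes P(x) + Ω(x), and suppose the backtracking condition φ(x*) ≤ P(x*) holds. Then φ(x₀) + Ω(x₀) - (φ(x*) + Ω(x*)) ≥ (θ/2)‖x* - x₀‖². -/
open scoped RealInnerProductSpace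

/-- Sufficient descent for the prox-quadratic update with backtracking condition. -/
theorem stmt4 {n : ℕ} (φ Ω : EuclideanSpace ℝ (Fin n) → ℝ)
    (hφ : Differentiable ℝ φ) (hΩ : ConvexOn ℝ Set.univ Ω)
    (θ : ℝ) (hθ : 0 < θ) (x₀ xstar : EuclideanSpace ℝ (Fin n))
    (P : EuclideanSpace ℝ (Fin n) → ℝ)
    (hP : ∀ x, P x = φ x₀ + ⟪gradient φ x₀, x - x₀⟫ + (θ / 2) * ‖x - x₀‖ ^ 2)
    (hmin : ∀ x, P xstar + Ω xstar ≤ P x + Ω x)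
    (hback : φ xstar ≤ P xstar) :
    φ x₀ + Ω x₀ - (φ xstar + Ω xstar) ≥ (θ / 2) * ‖xstar - x₀‖ ^ 2 := by
  set g := gradient φ x₀ with hg
  set d := xstar - x₀ with hd
  have key : ∀ t : ℝ, 0 < t → t ≤ 1 →
      ⟪g, d⟫ + θ * ‖d‖ ^ 2 + Ω xstar - Ω x₀ ≤ (θ / 2) * t * ‖d‖ ^ 2 := by
    intro t ht ht1
    have hx := hmin ((1 - t) • xstar + t • x₀)
    have hΩt : Ω ((1 - t) • xstar + t • x₀) ≤ (1 - t) * Ω xstar + t * Ω x₀ :=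
      hΩ.2 (Set.mem_univ _) (Set.mem_univ _) (by linarith) ht.le (by ring)
    rw [hP, hP] at hx
    have hvec : ((1 - t) • xstar + t • x₀) - x₀ = (1 - t) • d := by
      rw [hd]; module
    rw [hvec] at hx
    have hn : ‖(1 - t) • d‖ ^ 2 = (1 - t) ^ 2 * ‖d‖ ^ 2 := by
      rw [norm_smul, Real.norm_eq_abs, mul_pow, sq_abs]
    rw [hn, real_inner_smul_right] at hx
    nlinarith [hx, hΩt, ht, sq_nonneg (1 - t)]
  have hA : ⟪g, d⟫ + θ * ‖d‖ ^ 2 + Ω xstar - Ω x₀ ≤ 0 := by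
    apply le_of_forall_pos_le_add
    intro ε hε
    set c := (θ / 2) * ‖d‖ ^ 2 with hc
    have hc0 : 0 ≤ c := by positivity
    set t := min 1 (ε / (c + 1)) with htdef
    have ht0 : 0 < t := lt_min one_pos (by positivity)
    have ht1 : t ≤ 1 := min_le_left _ _
    have h1 := key t ht0 ht1
    have h2 : c * t ≤ ε := by
      have : t ≤ ε / (c + 1) := min_le_right _ _
      have h3 : c * t ≤ c * (ε / (c + 1)) := by
        apply mul_le_mul_of_nonneg_left this hc0
      have h4 : c * (ε / (c + 1)) ≤ ε := by
        rw [mul_comm, div_mul_eq_mul_div, div_le_iff₀ (by linarith : (0:ℝ) < c + 1)]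
        nlinarith
      linarith
    calc ⟪g, d⟫ + θ * ‖d‖ ^ 2 + Ω xstar - Ω x₀ ≤ (θ / 2) * t * ‖d‖ ^ 2 := h1
      _ = c * t := by ring
      _ ≤ ε := h2
      _ = 0 + ε := by ring
  have hb := hback
  rw [hP] at hb
  linarith [hb, hA]
end

section
/- Let f(z) = max(z, 0) be applied componentwise (ReLU). Fix c, ā ∈ ℝⁿ and ν > 0. Then the function z ↦ (ν/2)(‖z - c‖² + ‖ā - f(z)‖²) attains its minimum at z* given componentwise by z*_i = argmin over z_i of (ν/2)((z_i - c_i)² + (ā_i - max(z_i,0))²), where the minimizer over z_i ≤ 0 is min(c_i, 0), the minimizer over z_i ≥ 0 is max((c_i + ā_i)/2, 0), and z*_i is whichever of these two candidates gives the smaller objective value. -/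
/-- Closed-form solution of the ReLU `z`-subproblem in dlADMM (Assumption 1):
componentwise, the nonpositive branch is minimized at `min(cᵢ, 0)`, the
nonnegative branch at `max((cᵢ + āᵢ)/2, 0)`, and the global minimizer `z*` takes
whichever branch gives the smaller objective value. -/
theorem stmt16 {n : ℕ} (ν : ℝ) (hν : 0 < ν)
    (c a zstar : EuclideanSpace ℝ (Fin n)) (g : Fin n → ℝ → ℝ)
    (hg : ∀ i t, g i t = (ν / 2) * ((t - c i) ^ 2 + (a i - max t 0) ^ 2))
    (hz : ∀ i, zstar i =
      if g i (min (c i) 0) ≤ g i (max ((c i + a i) / 2) 0)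
      then min (c i) 0 else max ((c i + a i) / 2) 0) :
    (∀ i, ∀ t ≤ (0 : ℝ), g i (min (c i) 0) ≤ g i t) ∧
    (∀ i, ∀ t : ℝ, 0 ≤ t → g i (max ((c i + a i) / 2) 0) ≤ g i t) ∧
    (∀ z : EuclideanSpace ℝ (Fin n),
      (ν / 2) * (∑ i, (zstar i - c i) ^ 2 + ∑ i, (a i - max (zstar i) 0) ^ 2)
        ≤ (ν / 2) * (∑ i, (z i - c i) ^ 2 + ∑ i, (a i - max (z i) 0) ^ 2)) := by
  have hν2 : (0:ℝ) ≤ ν / 2 := by linarith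
  have key1 : ∀ i, ∀ t ≤ (0 : ℝ), g i (min (c i) 0) ≤ g i t := by
    intro i t ht
    rw [hg, hg]
    have h1 : max t 0 = 0 := max_eq_right ht
    have h2 : max (min (c i) 0) 0 = 0 := max_eq_right (min_le_right _ _)
    rw [h1, h2]
    apply mul_le_mul_of_nonneg_left _ hν2
    rcases le_total (c i) 0 with hc | hc
    · rw [min_eq_left hc]; nlinarith [sq_nonneg (t - c i)]
    · rw [min_eq_right hc]
      nlinarith [mul_nonneg (neg_nonneg.mpr ht) hc, sq_nonneg t]
  have key2 : ∀ i, ∀ t : ℝ, 0 ≤ t → g i (max ((c i + a i) / 2) 0) ≤ g i t := by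
    intro i t ht
    rw [hg, hg]
    have h1 : max t 0 = t := max_eq_left ht
    have h2 : max (max ((c i + a i) / 2) 0) 0 = max ((c i + a i) / 2) 0 :=
      max_eq_left (le_max_right _ _)
    rw [h1, h2]
    apply mul_le_mul_of_nonneg_left _ hν2
    rcases le_total ((c i + a i) / 2) 0 with hc | hc
    · rw [max_eq_right hc]
      nlinarith [mul_nonneg ht (neg_nonneg.mpr hc)]
    · rw [max_eq_left hc]
      nlinarith [sq_nonneg (t - (c i + a i) / 2)]
  refine ⟨key1, key2, ?_⟩
  intro z
  have hpt : ∀ i, g i (zstar i) ≤ g i (z i) := by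
    intro i
    have hmin : ∀ t : ℝ, g i (zstar i) ≤ g i t := by
      intro t
      rw [hz i]
      rcases le_total t 0 with h | h
      · split_ifs with hif
        · exact key1 i t h
        · exact le_trans (le_of_not_ge hif) (key1 i t h)
      · split_ifs with hif
        · exact le_trans hif (key2 i t h)
        · exact key2 i t h
    exact hmin (z i)
  have hsum : ∑ i, g i (zstar i) ≤ ∑ i, g i (z i) :=
    Finset.sum_le_sum fun i _ => hpt i
  have expand : ∀ w : EuclideanSpace ℝ (Fin n),
      ∑ i, g i (w i)
        = (ν / 2) * (∑ i, (w i - c i) ^ 2 + ∑ i, (a i - max (w i) 0) ^ 2) := by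
    intro w
    simp only [hg, mul_add]
    rw [Finset.mul_sum, Finset.mul_sum, ← Finset.sum_add_distrib]
  calc (ν / 2) * (∑ i, (zstar i - c i) ^ 2 + ∑ i, (a i - max (zstar i) 0) ^ 2)
      = ∑ i, g i (zstar i) := (expand zstar).symm
    _ ≤ ∑ i, g i (z i) := hsum
    _ = _ := expand z
end
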